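/- arXiv:2010.10732 — 6 statements merged into one kernel-verified Lean document; each statement's English description precedes it below -/
import Mathlib

section
/- Let v, ṽ be random row vectors in ℝ^d with E[v] = E[ṽ], Cov(v) = Cov(ṽ) = Σ, and Cov(v, ṽ) = Σ − diag(s^l). Let W ∈ ℝ^{d×m}, and let b, b̃ be zero-mean random vectors in ℝ^m, independent of (v, ṽ), with Cov(b) = Cov(b̃) = Σ_b and Cov(b, b̃) = Σ_b + Wᵀ diag(s^l) W − diag(s^{l+1}). Then u = vW + b and ũ = ṽW + b̃ satisfy E[u] = E[ũ], Cov(u) = Cov(ũ) = WᵀΣW + Σ_b, and Cov(u, ũ) = Cov(u) − diag(s^{l+1}); that is, ũ is a second-order knockoff of u with parameter s^{l+1}. -/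
/-!
Covariance is bilinear, and the cross terms between the signal `(v, ṽ)` and the independent bias
`(b, b̃)` vanish, so `Cov(vW + b, ṽW + b̃) = Wᵀ Cov(v, ṽ) W + Cov(b, b̃)` and likewise for the
other pairs. In the cross covariance the term `Wᵀ diag(s) W` coming from `Cov(v, ṽ)` is cancelled
by the one put into `Cov(b, b̃)`, leaving `Cov(u) - diag(s')`.
-/

open MeasureTheory ProbabilityTheory Matrix

/-- The (cross-)covariance matrix of two random vectors: `cov X Y i j = Cov(Xᵢ, Yⱼ)`. -/
noncomputable def covMatrix {Ω : Type*} [MeasurableSpace Ω] (μ : Measure Ω)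
    {n m : ℕ} (X : Ω → Fin n → ℝ) (Y : Ω → Fin m → ℝ) : Matrix (Fin n) (Fin m) ℝ :=
  fun i j => ∫ ω, (X ω i - ∫ ω', X ω' i ∂μ) * (Y ω j - ∫ ω', Y ω' j ∂μ) ∂μ

section

variable {Ω : Type*} [MeasurableSpace Ω] {μ : Measure Ω} {n m r : ℕ}

lemma covMatrix_apply (X : Ω → Fin n → ℝ) (Y : Ω → Fin m → ℝ) (i : Fin n) (j : Fin m) :
    covMatrix μ X Y i j = cov[fun ω ↦ X ω i, fun ω ↦ Y ω j; μ] :=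
  rfl

lemma covMatrix_transpose (X : Ω → Fin n → ℝ) (Y : Ω → Fin m → ℝ) :
    (covMatrix μ X Y)ᵀ = covMatrix μ Y X := by
  ext i j
  exact covariance_comm _ _

lemma memLp_vecMul_apply {p : ENNReal} {X : Ω → Fin n → ℝ} (hX : ∀ i, MemLp (fun ω ↦ X ω i) p μ)
    (A : Matrix (Fin n) (Fin m) ℝ) (j : Fin m) :
    MemLp (fun ω ↦ (X ω ᵥ* A) j) p μ :=
  memLp_finsetSum Finset.univ fun i _ ↦ (hX i).mul_const (A i j)

lemma ProbabilityTheory.IndepFun.covMatrix_eq_zero {X : Ω → Fin n → ℝ} {Y : Ω → Fin m → ℝ}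
    (h : IndepFun X Y μ)
    (hX : ∀ i, MemLp (fun ω ↦ X ω i) 2 μ) (hY : ∀ j, MemLp (fun ω ↦ Y ω j) 2 μ) :
    covMatrix μ X Y = 0 := by
  ext i j
  exact (h.comp (measurable_pi_apply i) (measurable_pi_apply j)).covariance_eq_zero (hX i) (hY j)

lemma integral_vecMul_add_apply {X : Ω → Fin n → ℝ} {b : Ω → Fin m → ℝ}
    (hX : ∀ i, Integrable (fun ω ↦ X ω i) μ) (hb : ∀ j, Integrable (fun ω ↦ b ω j) μ)
    (A : Matrix (Fin n) (Fin m) ℝ) (j : Fin m) :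
    ∫ ω, (X ω ᵥ* A + b ω) j ∂μ = ((fun i ↦ ∫ ω, X ω i ∂μ) ᵥ* A + fun k ↦ ∫ ω, b ω k ∂μ) j := by
  simp only [Pi.add_apply, vecMul, dotProduct]
  rw [integral_add (integrable_finsetSum _ fun i _ ↦ (hX i).mul_const (A i j)) (hb j),
    integral_finsetSum _ fun i _ ↦ (hX i).mul_const (A i j)]
  simp only [integral_mul_const]

variable [IsFiniteMeasure μ]

lemma covMatrix_add_left {X X' : Ω → Fin n → ℝ} {Y : Ω → Fin m → ℝ}
    (hX : ∀ i, MemLp (fun ω ↦ X ω i) 2 μ) (hX' : ∀ i, MemLp (fun ω ↦ X' ω i) 2 μ)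
    (hY : ∀ j, MemLp (fun ω ↦ Y ω j) 2 μ) :
    covMatrix μ (X + X') Y = covMatrix μ X Y + covMatrix μ X' Y := by
  ext i j
  exact covariance_add_left (hX i) (hX' i) (hY j)

lemma covMatrix_add_right {X : Ω → Fin n → ℝ} {Y Y' : Ω → Fin m → ℝ}
    (hX : ∀ i, MemLp (fun ω ↦ X ω i) 2 μ) (hY : ∀ j, MemLp (fun ω ↦ Y ω j) 2 μ)
    (hY' : ∀ j, MemLp (fun ω ↦ Y' ω j) 2 μ) :
    covMatrix μ X (Y + Y') = covMatrix μ X Y + covMatrix μ X Y' := by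
  rw [← covMatrix_transpose, covMatrix_add_left hY hY' hX, transpose_add, covMatrix_transpose,
    covMatrix_transpose]

lemma covMatrix_vecMul_left {X : Ω → Fin n → ℝ} {Y : Ω → Fin m → ℝ}
    (hX : ∀ i, MemLp (fun ω ↦ X ω i) 2 μ) (hY : ∀ j, MemLp (fun ω ↦ Y ω j) 2 μ)
    (A : Matrix (Fin n) (Fin r) ℝ) :
    covMatrix μ (fun ω ↦ X ω ᵥ* A) Y = Aᵀ * covMatrix μ X Y := by
  ext k j
  rw [covMatrix_apply]
  simp only [vecMul, dotProduct]
  rw [covariance_fun_sum_left (fun i ↦ (hX i).mul_const (A i k)) (hY j)]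
  simp only [covariance_mul_const_left, mul_apply, transpose_apply, covMatrix_apply, mul_comm]

lemma covMatrix_vecMul_right {X : Ω → Fin n → ℝ} {Y : Ω → Fin m → ℝ}
    (hX : ∀ i, MemLp (fun ω ↦ X ω i) 2 μ) (hY : ∀ j, MemLp (fun ω ↦ Y ω j) 2 μ)
    (B : Matrix (Fin m) (Fin r) ℝ) :
    covMatrix μ X (fun ω ↦ Y ω ᵥ* B) = covMatrix μ X Y * B := by
  rw [← covMatrix_transpose, covMatrix_vecMul_left hY hX, transpose_mul, transpose_transpose,
    covMatrix_transpose]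

lemma covMatrix_vecMul_add_vecMul_add {X : Ω → Fin n → ℝ} {Y : Ω → Fin m → ℝ}
    {b c : Ω → Fin r → ℝ}
    (hX : ∀ i, MemLp (fun ω ↦ X ω i) 2 μ) (hY : ∀ j, MemLp (fun ω ↦ Y ω j) 2 μ)
    (hb : ∀ k, MemLp (fun ω ↦ b ω k) 2 μ) (hc : ∀ k, MemLp (fun ω ↦ c ω k) 2 μ)
    (hXc : IndepFun X c μ) (hbY : IndepFun b Y μ)
    (A : Matrix (Fin n) (Fin r) ℝ) (B : Matrix (Fin m) (Fin r) ℝ) :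
    covMatrix μ (fun ω ↦ X ω ᵥ* A + b ω) (fun ω ↦ Y ω ᵥ* B + c ω) =
      Aᵀ * covMatrix μ X Y * B + covMatrix μ b c := by
  have hXA := memLp_vecMul_apply hX A
  have hYB := memLp_vecMul_apply hY B
  change covMatrix μ ((fun ω ↦ X ω ᵥ* A) + b) ((fun ω ↦ Y ω ᵥ* B) + c) = _
  rw [covMatrix_add_left (Y := (fun ω ↦ Y ω ᵥ* B) + c) hXA hb fun k ↦ (hYB k).add (hc k),
    covMatrix_add_right hXA hYB hc, covMatrix_add_right hb hYB hc,
    covMatrix_vecMul_left hX hYB, covMatrix_vecMul_right hX hY,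
    covMatrix_vecMul_left hX hc, covMatrix_vecMul_right hb hY,
    hXc.covMatrix_eq_zero hX hc, hbY.covMatrix_eq_zero hb hY, Matrix.mul_zero, Matrix.zero_mul,
    add_zero, zero_add, Matrix.mul_assoc]

end

/-- Lemma 2 of the paper: passing a second-order knockoff pair through a linear layer and adding
suitably correlated independent zero-mean biases yields again a second-order knockoff pair,
with parameter `s'` (i.e. `s^{l+1}`). -/
theorem second_order_knockoff_linear_with_bias
    {Ω : Type*} [MeasurableSpace Ω] (μ : Measure Ω) [IsProbabilityMeasure μ]
    {d m : ℕ} (v vtil : Ω → Fin d → ℝ) (b btil : Ω → Fin m → ℝ)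
    (hv : ∀ i, MemLp (fun ω => v ω i) 2 μ)
    (hvtil : ∀ i, MemLp (fun ω => vtil ω i) 2 μ)
    (hb : ∀ j, MemLp (fun ω => b ω j) 2 μ)
    (hbtil : ∀ j, MemLp (fun ω => btil ω j) 2 μ)
    (Sig : Matrix (Fin d) (Fin d) ℝ) (s : Fin d → ℝ) (s' : Fin m → ℝ)
    (Sigb : Matrix (Fin m) (Fin m) ℝ)
    (W : Matrix (Fin d) (Fin m) ℝ)
    (hmean : ∀ i, ∫ ω, v ω i ∂μ = ∫ ω, vtil ω i ∂μ)
    (hcov : covMatrix μ v v = Sig) (hcovtil : covMatrix μ vtil vtil = Sig)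
    (hcross : covMatrix μ v vtil = Sig - Matrix.diagonal s)
    (hbmean : ∀ j, ∫ ω, b ω j ∂μ = 0) (hbtilmean : ∀ j, ∫ ω, btil ω j ∂μ = 0)
    (hbcov : covMatrix μ b b = Sigb) (hbtilcov : covMatrix μ btil btil = Sigb)
    (hbcross : covMatrix μ b btil =
      Sigb + Wᵀ * Matrix.diagonal s * W - Matrix.diagonal s')
    (hindep : IndepFun (fun ω => (v ω, vtil ω)) (fun ω => (b ω, btil ω)) μ) :
    (∀ j, ∫ ω, (∑ i, v ω i * W i j) + b ω j ∂μ =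
        ∫ ω, (∑ i, vtil ω i * W i j) + btil ω j ∂μ) ∧
    covMatrix μ (fun ω j => (∑ i, v ω i * W i j) + b ω j)
        (fun ω j => (∑ i, v ω i * W i j) + b ω j) = Wᵀ * Sig * W + Sigb ∧
    covMatrix μ (fun ω j => (∑ i, vtil ω i * W i j) + btil ω j)
        (fun ω j => (∑ i, vtil ω i * W i j) + btil ω j) = Wᵀ * Sig * W + Sigb ∧
    covMatrix μ (fun ω j => (∑ i, v ω i * W i j) + b ω j)
        (fun ω j => (∑ i, vtil ω i * W i j) + btil ω j) =
      (Wᵀ * Sig * W + Sigb) - Matrix.diagonal s' := by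
  have hvb : IndepFun v b μ := hindep.comp measurable_fst measurable_fst
  have hvbtil : IndepFun v btil μ := hindep.comp measurable_fst measurable_snd
  have hvtilbtil : IndepFun vtil btil μ := hindep.comp measurable_snd measurable_snd
  have hbvtil : IndepFun b vtil μ := (hindep.comp measurable_snd measurable_fst).symm
  rw [show (fun ω j => (∑ i, v ω i * W i j) + b ω j) = fun ω => v ω ᵥ* W + b ω from rfl,
    show (fun ω j => (∑ i, vtil ω i * W i j) + btil ω j) = fun ω => vtil ω ᵥ* W + btil ω from rfl,
    covMatrix_vecMul_add_vecMul_add hv hv hb hb hvb hvb.symm,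
    covMatrix_vecMul_add_vecMul_add hvtil hvtil hbtil hbtil hvtilbtil hvtilbtil.symm,
    covMatrix_vecMul_add_vecMul_add hv hvtil hb hbtil hvbtil hbvtil,
    hcov, hcovtil, hcross, hbcov, hbtilcov, hbcross]
  refine ⟨fun j ↦ ?_, rfl, rfl, ?_⟩
  · have hmeans := integral_vecMul_add_apply (μ := μ) (fun i ↦ (hv i).integrable one_le_two)
      (fun j ↦ (hb j).integrable one_le_two) W j
    have hmeans' := integral_vecMul_add_apply (μ := μ) (fun i ↦ (hvtil i).integrable one_le_two)
      (fun j ↦ (hbtil j).integrable one_le_two) W j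
    simp only [funext hmean, hbmean, hbtilmean] at hmeans hmeans'
    exact hmeans.trans hmeans'.symm
  · rw [Matrix.mul_sub, Matrix.sub_mul]
    abel
end

section
/- Let z = (v, ṽ) ∈ ℝ^{2d} be a random vector with joint covariance matrix G = [[Σ, Σ − diag(s)], [Σ − diag(s), Σ]] and with E[v] = E[ṽ]. Then for every subset S ⊆ {1,…,d}, the joint first and second moments of [v, ṽ]_{swap(S)} equal those of [v, ṽ]. -/
/-!
Every second moment is a covariance plus a product of means. With equal means, the covariance of
coordinate `i` of one copy with coordinate `j` of another is `Σ i j`, lowered by `s i` exactly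
when `i = j` and the copies differ. Swapping coordinate `i` exchanges the two copies at `i`, so at
`i = j` it preserves whether the two copies agree, and at `i ≠ j` the entry does not depend on the
copies.
-/

open MeasureTheory Matrix ProbabilityTheory

lemma integral_mul_eq_covariance_add_mul {Ω : Type*} [MeasurableSpace Ω] {μ : Measure Ω}
    [IsProbabilityMeasure μ] {X Y : Ω → ℝ} (hX : MemLp X 2 μ) (hY : MemLp Y 2 μ) :
    ∫ ω, X ω * Y ω ∂μ = cov[X, Y; μ] + (∫ ω, X ω ∂μ) * ∫ ω, Y ω ∂μ := by
  rw [covariance_eq_sub hX hY]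
  simp only [Pi.mul_apply, sub_add_cancel]

lemma ite_xor_diagonal_eq {ι : Type*} [DecidableEq ι] (s : ι → ℝ) (f : ι → Bool)
    (a b : Bool) (i j : ι) :
    (if xor (f i) a = xor (f j) b then 0 else diagonal s i j)
      = if a = b then 0 else diagonal s i j := by
  obtain rfl | hij := eq_or_ne i j
  · simp only [Bool.xor_right_inj]
  · simp only [diagonal_apply_ne _ hij, ite_self]

/- The two copies of a random vector are `x false` and `x true`; swapping the coordinates where
`f` is `true` turns coordinate `i` of copy `a` into coordinate `i` of copy `xor (f i) a`. -/
section SwapCopies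

variable {Ω ι : Type*} [MeasurableSpace Ω] {μ : Measure Ω} [IsProbabilityMeasure μ]
  [DecidableEq ι] {x : Bool → Ω → ι → ℝ} {m : ι → ℝ} {Sig : Matrix ι ι ℝ} {s : ι → ℝ}

lemma integral_mul_copies_eq (hx : ∀ a i, MemLp (fun ω => x a ω i) 2 μ)
    (hmean : ∀ a i, ∫ ω, x a ω i ∂μ = m i)
    (hcov : ∀ a b i j, cov[fun ω => x a ω i, fun ω => x b ω j; μ]
      = Sig i j - if a = b then 0 else diagonal s i j)
    (a b : Bool) (i j : ι) :
    ∫ ω, x a ω i * x b ω j ∂μ = Sig i j - (if a = b then 0 else diagonal s i j) + m i * m j := by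
  rw [integral_mul_eq_covariance_add_mul (hx a i) (hx b j), hcov, hmean, hmean]

theorem integral_mul_swap_copies (hx : ∀ a i, MemLp (fun ω => x a ω i) 2 μ)
    (hmean : ∀ a i, ∫ ω, x a ω i ∂μ = m i)
    (hcov : ∀ a b i j, cov[fun ω => x a ω i, fun ω => x b ω j; μ]
      = Sig i j - if a = b then 0 else diagonal s i j)
    (f : ι → Bool) (a b : Bool) (i j : ι) :
    ∫ ω, x (xor (f i) a) ω i * x (xor (f j) b) ω j ∂μ = ∫ ω, x a ω i * x b ω j ∂μ := by
  rw [integral_mul_copies_eq hx hmean hcov, integral_mul_copies_eq hx hmean hcov,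
    ite_xor_diagonal_eq]

end SwapCopies

/-- If `(v, vtil)` has equal means and joint covariance of block form
`[[Σ, Σ − diag s], [Σ − diag s, Σ]]`, then for every subset `S` of coordinates the first and
second joint moments of the swapped pair equal those of the original pair. -/
theorem swap_preserves_first_two_moments
    {Ω : Type*} [MeasurableSpace Ω] (μ : Measure Ω) [IsProbabilityMeasure μ]
    {d : ℕ} (v vtil : Ω → Fin d → ℝ)
    (hv : ∀ i, MemLp (fun ω => v ω i) 2 μ)
    (hvtil : ∀ i, MemLp (fun ω => vtil ω i) 2 μ)
    (Sig : Matrix (Fin d) (Fin d) ℝ) (s : Fin d → ℝ)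
    (hmean : ∀ i, ∫ ω, v ω i ∂μ = ∫ ω, vtil ω i ∂μ)
    (hcov : (fun i j => ∫ ω, (v ω i - ∫ ω', v ω' i ∂μ) * (v ω j - ∫ ω', v ω' j ∂μ) ∂μ) = Sig)
    (hcovtil :
      (fun i j => ∫ ω, (vtil ω i - ∫ ω', vtil ω' i ∂μ) * (vtil ω j - ∫ ω', vtil ω' j ∂μ) ∂μ)
        = Sig)
    (hcross :
      (fun i j => ∫ ω, (v ω i - ∫ ω', v ω' i ∂μ) * (vtil ω j - ∫ ω', vtil ω' j ∂μ) ∂μ)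
        = fun i j => Sig i j - Matrix.diagonal s i j)
    (hcross' :
      (fun i j => ∫ ω, (vtil ω i - ∫ ω', vtil ω' i ∂μ) * (v ω j - ∫ ω', v ω' j ∂μ) ∂μ)
        = fun i j => Sig i j - Matrix.diagonal s i j) :
    ∀ S : Finset (Fin d),
      (∀ i, ∫ ω, (if i ∈ S then vtil ω i else v ω i) ∂μ = ∫ ω, v ω i ∂μ) ∧
      (∀ i, ∫ ω, (if i ∈ S then v ω i else vtil ω i) ∂μ = ∫ ω, vtil ω i ∂μ) ∧
      (∀ i j, ∫ ω, (if i ∈ S then vtil ω i else v ω i) * (if j ∈ S then vtil ω j else v ω j) ∂μ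
          = ∫ ω, v ω i * v ω j ∂μ) ∧
      (∀ i j, ∫ ω, (if i ∈ S then vtil ω i else v ω i) * (if j ∈ S then v ω j else vtil ω j) ∂μ
          = ∫ ω, v ω i * vtil ω j ∂μ) ∧
      (∀ i j, ∫ ω, (if i ∈ S then v ω i else vtil ω i) * (if j ∈ S then v ω j else vtil ω j) ∂μ
          = ∫ ω, vtil ω i * vtil ω j ∂μ) := by
  intro S
  let x : Bool → Ω → Fin d → ℝ := fun a => bif a then vtil else v
  have hx_false : x false = v := rfl
  have hx_true : x true = vtil := rfl
  have hx : ∀ a i, MemLp (fun ω => x a ω i) 2 μ := by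
    rintro (_ | _) i
    exacts [hv i, hvtil i]
  have hxmean : ∀ a i, ∫ ω, x a ω i ∂μ = ∫ ω, v ω i ∂μ := by
    rintro (_ | _) i
    exacts [rfl, (hmean i).symm]
  have hxcov : ∀ a b i j, cov[fun ω => x a ω i, fun ω => x b ω j; μ]
      = Sig i j - if a = b then 0 else diagonal s i j := by
    rintro (_ | _) (_ | _) i j
    · rw [if_pos rfl, sub_zero]
      exact congrFun (congrFun hcov i) j
    · exact congrFun (congrFun hcross i) j
    · exact congrFun (congrFun hcross' i) j
    · rw [if_pos rfl, sub_zero]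
      exact congrFun (congrFun hcovtil i) j
  have hswap (a : Bool) (i : Fin d) (ω : Ω) :
      x (xor (decide (i ∈ S)) a) ω i = if i ∈ S then x (!a) ω i else x a ω i := by
    by_cases hi : i ∈ S <;> simp [hi]
  have mean (a : Bool) (i : Fin d) :
      ∫ ω, x (xor (decide (i ∈ S)) a) ω i ∂μ = ∫ ω, x a ω i ∂μ :=
    (hxmean _ i).trans (hxmean a i).symm
  have moment := integral_mul_swap_copies hx hxmean hxcov (fun i => decide (i ∈ S))
  refine ⟨fun i => ?_, fun i => ?_, fun i j => ?_, fun i j => ?_, fun i j => ?_⟩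
  · simpa only [hswap, Bool.not_false, hx_false, hx_true] using mean false i
  · simpa only [hswap, Bool.not_true, hx_false, hx_true] using mean true i
  · simpa only [hswap, Bool.not_false, hx_false, hx_true] using moment false false i j
  · simpa only [hswap, Bool.not_false, Bool.not_true, hx_false, hx_true] using moment false true i j
  · simpa only [hswap, Bool.not_true, hx_false, hx_true] using moment true true i j
end

section
/- Conversely, if the pair (v, ṽ) of square-integrable random vectors in ℝ^d has the property that [v, ṽ] and [v, ṽ]_{swap(S)} have the same mean vector and covariance matrix for every subset S ⊆ {1,…,d}, then E[v] = E[ṽ], Cov(v) = Cov(ṽ), and Cov(v, ṽ) differs from Cov(v) only on the diagonal, i.e. Cov(v, ṽ)_{ij} = Cov(v)_{ij} for all i ≠ j. -/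
open MeasureTheory Matrix

/-!
Only two swaps are needed. Swapping every coordinate exchanges `v` and `ṽ`, so invariance of
the means and of the lower-right covariance block under `S = univ` gives `E v = E ṽ` and
`Cov v = Cov ṽ`. Swapping the single coordinate `j` turns the `(i, j)` entry of the
cross-covariance, for `i ≠ j`, into `Cov(v_i, v_j)`.
-/

lemma covMatrix_apply_congr {Ω : Type*} [MeasurableSpace Ω] (μ : Measure Ω) {n m : ℕ}
    {X X' : Ω → Fin n → ℝ} {Y Y' : Ω → Fin m → ℝ} {i : Fin n} {j : Fin m}
    (hX : ∀ ω, X ω i = X' ω i) (hY : ∀ ω, Y ω j = Y' ω j) :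
    covMatrix μ X Y i j = covMatrix μ X' Y' i j := by
  simp only [covMatrix, hX, hY]

theorem second_order_swap_invariance_characterization_general
    {Ω : Type*} [MeasurableSpace Ω] (μ : Measure Ω)
    {d : ℕ} (v vtil : Ω → Fin d → ℝ)
    (hswap : ∀ S : Finset (Fin d),
      (∀ i, ∫ ω, (if i ∈ S then vtil ω i else v ω i) ∂μ = ∫ ω, v ω i ∂μ) ∧
      (∀ i, ∫ ω, (if i ∈ S then v ω i else vtil ω i) ∂μ = ∫ ω, vtil ω i ∂μ) ∧
      covMatrix μ (fun ω i => if i ∈ S then vtil ω i else v ω i)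
          (fun ω i => if i ∈ S then vtil ω i else v ω i) = covMatrix μ v v ∧
      covMatrix μ (fun ω i => if i ∈ S then vtil ω i else v ω i)
          (fun ω i => if i ∈ S then v ω i else vtil ω i) = covMatrix μ v vtil ∧
      covMatrix μ (fun ω i => if i ∈ S then v ω i else vtil ω i)
          (fun ω i => if i ∈ S then vtil ω i else v ω i) = covMatrix μ vtil v ∧
      covMatrix μ (fun ω i => if i ∈ S then v ω i else vtil ω i)
          (fun ω i => if i ∈ S then v ω i else vtil ω i) = covMatrix μ vtil vtil) :
    (∀ i, ∫ ω, v ω i ∂μ = ∫ ω, vtil ω i ∂μ) ∧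
    covMatrix μ v v = covMatrix μ vtil vtil ∧
    (∀ i j, i ≠ j → covMatrix μ v vtil i j = covMatrix μ v v i j) := by
  obtain ⟨hmean, -, -, -, -, hcov⟩ := hswap Finset.univ
  simp only [Finset.mem_univ, if_true] at hmean hcov
  refine ⟨fun i => (hmean i).symm, hcov, fun i j hij => ?_⟩
  have hsingle := congrFun (congrFun (hswap {j}).2.2.2.1 i) j
  rw [← hsingle]
  exact covMatrix_apply_congr μ (fun ω => by simp [hij]) (fun ω => by simp)

/-- Converse: if the mean vector and covariance matrix of `[v, vtil]` are invariant under
swapping any subset of corresponding coordinates, then `E[v] = E[vtil]`, `Cov v = Cov vtil`,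
and the cross-covariance agrees with `Cov v` off the diagonal. -/
theorem second_order_swap_invariance_characterization
    {Ω : Type*} [MeasurableSpace Ω] (μ : Measure Ω) [IsProbabilityMeasure μ]
    {d : ℕ} (v vtil : Ω → Fin d → ℝ)
    (hv : ∀ i, MemLp (fun ω => v ω i) 2 μ)
    (hvtil : ∀ i, MemLp (fun ω => vtil ω i) 2 μ)
    (hswap : ∀ S : Finset (Fin d),
      (∀ i, ∫ ω, (if i ∈ S then vtil ω i else v ω i) ∂μ = ∫ ω, v ω i ∂μ) ∧
      (∀ i, ∫ ω, (if i ∈ S then v ω i else vtil ω i) ∂μ = ∫ ω, vtil ω i ∂μ) ∧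
      covMatrix μ (fun ω i => if i ∈ S then vtil ω i else v ω i)
          (fun ω i => if i ∈ S then vtil ω i else v ω i) = covMatrix μ v v ∧
      covMatrix μ (fun ω i => if i ∈ S then vtil ω i else v ω i)
          (fun ω i => if i ∈ S then v ω i else vtil ω i) = covMatrix μ v vtil ∧
      covMatrix μ (fun ω i => if i ∈ S then v ω i else vtil ω i)
          (fun ω i => if i ∈ S then vtil ω i else v ω i) = covMatrix μ vtil v ∧
      covMatrix μ (fun ω i => if i ∈ S then v ω i else vtil ω i)
          (fun ω i => if i ∈ S then v ω i else vtil ω i) = covMatrix μ vtil vtil) :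
    (∀ i, ∫ ω, v ω i ∂μ = ∫ ω, vtil ω i ∂μ) ∧
    covMatrix μ v v = covMatrix μ vtil vtil ∧
    (∀ i j, i ≠ j → covMatrix μ v vtil i j = covMatrix μ v v i j) :=
  second_order_swap_invariance_characterization_general μ v vtil hswap
end

section
/- The block matrix G = [[Σ, Σ − diag(s)], [Σ − diag(s), Σ]] is positive semidefinite if and only if s ≥ 0 componentwise and 2Σ − diag(s) is positive semidefinite (where Σ is a symmetric positive semidefinite d×d matrix). -/
/-!
With `U = [[1, 1], [1, -1]]`, which is invertible since `U * U = 2`, one has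
`U * [[A, B], [B, A]] * Uᴴ = 2 • [[A + B, 0], [0, A - B]]`. Congruence by an invertible matrix
preserves positive semidefiniteness in both directions, so the block matrix is positive
semidefinite iff `A + B` and `A - B` are. For `A = Σ` and `B = Σ - diag s` these are
`2Σ - diag s` and `diag s`.
-/

open Matrix
open scoped ComplexOrder

namespace Matrix

variable {m n R 𝕜 : Type*} [Fintype m] [Fintype n]

theorem posSemidef_fromBlocks_zero_zero_iff [Ring R] [PartialOrder R] [StarRing R] [AddLeftMono R]
    {A : Matrix m m R} {D : Matrix n n R} :
    (fromBlocks A 0 0 D).PosSemidef ↔ A.PosSemidef ∧ D.PosSemidef := by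
  refine ⟨fun h ↦ ⟨h.submatrix Sum.inl, h.submatrix Sum.inr⟩, fun ⟨hA, hD⟩ ↦ ?_⟩
  refine .of_dotProduct_mulVec_nonneg (hA.isHermitian.fromBlocks (by simp) hD.isHermitian)
    fun x ↦ ?_
  rw [← Sum.elim_comp_inl_inr x, Function.star_sumElim, fromBlocks_mulVec,
    sumElim_dotProduct_sumElim]
  simpa using add_nonneg (hA.dotProduct_mulVec_nonneg _) (hD.dotProduct_mulVec_nonneg _)

variable [RCLike 𝕜]

omit [Fintype n] in
theorem posSemidef_smul_iff_of_pos {M : Matrix n n 𝕜} {c : ℝ} (hc : 0 < c) :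
    (c • M).PosSemidef ↔ M.PosSemidef :=
  ⟨fun h ↦ by simpa [smul_smul, hc.ne'] using h.smul (inv_nonneg.2 hc.le), (·.smul hc.le)⟩

variable [DecidableEq n]

theorem fromBlocks_one_one_one_neg_one_mul_self :
    (fromBlocks 1 1 1 (-1) : Matrix (n ⊕ n) (n ⊕ n) 𝕜) * fromBlocks 1 1 1 (-1) = (2 : 𝕜) • 1 := by
  rw [fromBlocks_multiply, ← fromBlocks_one, fromBlocks_smul]
  simp [two_smul]

theorem isUnit_fromBlocks_one_one_one_neg_one :
    IsUnit (fromBlocks 1 1 1 (-1) : Matrix (n ⊕ n) (n ⊕ n) 𝕜) := by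
  have hinv : (fromBlocks 1 1 1 (-1) : Matrix (n ⊕ n) (n ⊕ n) 𝕜) *
      ((2 : 𝕜)⁻¹ • fromBlocks 1 1 1 (-1)) = 1 := by
    rw [Matrix.mul_smul, fromBlocks_one_one_one_neg_one_mul_self, smul_smul,
      inv_mul_cancel₀ two_ne_zero, one_smul]
  exact ⟨⟨_, _, hinv, by rwa [Matrix.smul_mul, ← Matrix.mul_smul]⟩, rfl⟩

theorem fromBlocks_one_one_one_neg_one_conj (A B : Matrix n n 𝕜) :
    fromBlocks 1 1 1 (-1) * fromBlocks A B B A * star (fromBlocks 1 1 1 (-1))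
      = (2 : ℝ) • fromBlocks (A + B) 0 0 (A - B) := by
  rw [star_eq_conjTranspose, fromBlocks_conjTranspose]
  simp only [conjTranspose_one, conjTranspose_neg, fromBlocks_multiply, fromBlocks_smul,
    Matrix.one_mul, Matrix.mul_one, Matrix.neg_mul, Matrix.mul_neg, smul_zero]
  congr 1 <;> module

theorem posSemidef_fromBlocks_self_iff {A B : Matrix n n 𝕜} :
    (fromBlocks A B B A).PosSemidef ↔ (A + B).PosSemidef ∧ (A - B).PosSemidef := by
  rw [← isUnit_fromBlocks_one_one_one_neg_one.posSemidef_star_right_conjugate_iff,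
    fromBlocks_one_one_one_neg_one_conj, posSemidef_smul_iff_of_pos two_pos,
    posSemidef_fromBlocks_zero_zero_iff]

end Matrix

theorem knockoff_block_posSemidef_iff_general
    {d : ℕ} (Sig : Matrix (Fin d) (Fin d) ℝ)
    (s : Fin d → ℝ) :
    (Matrix.fromBlocks Sig (Sig - Matrix.diagonal s) (Sig - Matrix.diagonal s) Sig).PosSemidef
      ↔ (∀ j, 0 ≤ s j) ∧ ((2 : ℝ) • Sig - Matrix.diagonal s).PosSemidef := by
  rw [posSemidef_fromBlocks_self_iff, sub_sub_cancel, posSemidef_diagonal_iff, and_comm,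
    ← add_sub_assoc, ← two_smul ℝ]

/-- The knockoff block matrix `G = [[Σ, Σ − diag s], [Σ − diag s, Σ]]` is positive semidefinite
iff `s ≥ 0` componentwise and `2Σ − diag s` is positive semidefinite. -/
theorem knockoff_block_posSemidef_iff
    {d : ℕ} (Sig : Matrix (Fin d) (Fin d) ℝ) (hSym : Sig.IsSymm) (hPSD : Sig.PosSemidef)
    (s : Fin d → ℝ) :
    (Matrix.fromBlocks Sig (Sig - Matrix.diagonal s) (Sig - Matrix.diagonal s) Sig).PosSemidef
      ↔ (∀ j, 0 ≤ s j) ∧ ((2 : ℝ) • Sig - Matrix.diagonal s).PosSemidef :=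
  knockoff_block_posSemidef_iff_general Sig s
end

section
/- Let Σ be symmetric positive definite with smallest eigenvalue λ_min > 0. Then for any s ∈ ℝ^d with 0 ≤ s_j ≤ 2λ_min for all j, the block matrix [[Σ, Σ − diag(s)], [Σ − diag(s), Σ]] is positive semidefinite; hence a valid second-order knockoff covariance structure with parameter s exists. -/
/-!
With `D = diag(s) / 2`, the block matrix is the sum of `[[Σ - D, Σ - D], [Σ - D, Σ - D]]` and
`[[D, -D], [-D, D]]`, the congruences of `Σ - D` and `D` by `[I; I]` and `[I; -I]`. Both are
positive semidefinite: `D ⪰ 0` since `s ≥ 0`, and `D ⪯ λ_min I ⪯ Σ` in the Loewner order.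
-/

open Matrix

namespace Matrix

variable {n R 𝕜 : Type*} [Fintype n]

section Blocks

variable [Ring R] [PartialOrder R] [StarRing R] {A : Matrix n n R}

theorem PosSemidef.fromBlocks_self (hA : A.PosSemidef) : (fromBlocks A A A A).PosSemidef := by
  classical
  simpa [conjTranspose_fromRows_eq_fromCols_conjTranspose, fromRows_mul_fromCols] using
    hA.mul_mul_conjTranspose_same (fromRows (1 : Matrix n n R) (1 : Matrix n n R))

theorem PosSemidef.fromBlocks_neg_self (hA : A.PosSemidef) :
    (fromBlocks A (-A) (-A) A).PosSemidef := by
  classical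
  simpa [conjTranspose_fromRows_eq_fromCols_conjTranspose, fromRows_mul_fromCols] using
    hA.mul_mul_conjTranspose_same (fromRows (1 : Matrix n n R) (-1 : Matrix n n R))

theorem posSemidef_fromBlocks_sub_two_smul [AddLeftMono R] {S D : Matrix n n R}
    (hD : D.PosSemidef) (hSD : (S - D).PosSemidef) :
    (fromBlocks S (S - 2 • D) (S - 2 • D) S).PosSemidef := by
  have hsum := hSD.fromBlocks_self.add hD.fromBlocks_neg_self
  rwa [fromBlocks_add, sub_add_cancel, ← sub_eq_add_neg, sub_sub, ← two_smul ℕ] at hsum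

end Blocks

open scoped ComplexOrder MatrixOrder in
theorem IsHermitian.posSemidef_sub_diagonal [RCLike 𝕜] [DecidableEq n] {A : Matrix n n 𝕜}
    (hA : A.IsHermitian) {t : n → ℝ} (ht : ∀ j i, t j ≤ hA.eigenvalues i) :
    (A - diagonal fun j => (t j : 𝕜)).PosSemidef := by
  set c := ⨅ i, hA.eigenvalues i
  have hcA : algebraMap ℝ _ c ≤ A := by
    rw [algebraMap_le_iff_le_spectrum hA.isSelfAdjoint, hA.spectrum_real_eq_range_eigenvalues]
    rintro _ ⟨i, rfl⟩
    exact ciInf_le (Finite.bddBelow_range _) i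
  have htc : diagonal (fun j => (t j : 𝕜)) ≤ algebraMap ℝ _ c := by
    rw [le_iff, algebraMap_eq_diagonal, diagonal_sub, posSemidef_diagonal_iff]
    intro j
    have : Nonempty n := ⟨j⟩
    simpa using le_ciInf (ht j)
  exact le_iff.mp (htc.trans hcA)

end Matrix

theorem knockoff_block_posSemidef_of_small_s_general
    {d : ℕ} (Sig : Matrix (Fin d) (Fin d) ℝ) (hH : Sig.IsHermitian)
    (s : Fin d → ℝ) (hs0 : ∀ j, 0 ≤ s j)
    (hs2 : ∀ j i, s j ≤ 2 * hH.eigenvalues i) :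
    (Matrix.fromBlocks Sig (Sig - Matrix.diagonal s)
      (Sig - Matrix.diagonal s) Sig).PosSemidef := by
  have hD : (diagonal (s / 2)).PosSemidef :=
    posSemidef_diagonal_iff.mpr fun j => div_nonneg (hs0 j) zero_le_two
  have hSD : (Sig - diagonal (s / 2)).PosSemidef :=
    hH.posSemidef_sub_diagonal fun j i => by
      show s j / 2 ≤ _
      linarith [hs2 j i]
  have h2 : 2 • diagonal (s / 2) = diagonal s := by
    rw [← diagonal_smul]
    congr 1
    ext j
    simp [mul_div_cancel₀]
  simpa only [h2] using posSemidef_fromBlocks_sub_two_smul hD hSD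

/-- If `Σ` is symmetric positive definite with smallest eigenvalue `λ_min`, then for any
`s` with `0 ≤ sⱼ ≤ 2 λ_min` for all `j`, the knockoff block matrix
`[[Σ, Σ − diag s], [Σ − diag s, Σ]]` is positive semidefinite. -/
theorem knockoff_block_posSemidef_of_small_s
    {d : ℕ} (Sig : Matrix (Fin d) (Fin d) ℝ) (hH : Sig.IsHermitian) (hPD : Sig.PosDef)
    (s : Fin d → ℝ) (hs0 : ∀ j, 0 ≤ s j)
    (hs2 : ∀ j i, s j ≤ 2 * hH.eigenvalues i) :
    (Matrix.fromBlocks Sig (Sig - Matrix.diagonal s)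
      (Sig - Matrix.diagonal s) Sig).PosSemidef :=
  knockoff_block_posSemidef_of_small_s_general Sig hH s hs0 hs2
end

section
/- If Ã is a knockoff of A with respect to Y and Z is a random element independent of (A, Ã, Y), then for any measurable h, the pair (h(A, Z), h(Ã, Z)) satisfies the conditional independence property: h(Ã, Z) ⊥ Y | (A, Z). -/
/-!
Write `W = (A, Ã, Y)`. Because `Z` is independent of `W`, conditioning a `W`-measurable quantity on
`(A, Z)` gives the same result as conditioning it on `A` alone (check the set integrals on the
π-system of sets `{A ∈ s, Z ∈ u}`). On an event `{Ã ∈ s, Z ∈ u}` the factor `1{Z ∈ u}` is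
`(A, Z)`-measurable and pulls out, so the required factorization given `(A, Z)` reduces to the
one for `Ã ⊥ Y | A`. Finally `h(Ã, Z)` generates a smaller σ-algebra than `(Ã, Z)`.
-/

open MeasureTheory ProbabilityTheory

section

open MeasurableSpace Set Filter

variable {Ω E : Type*} [NormedAddCommGroup E] [NormedSpace ℝ E]

lemma isPiSystem_image2_inter (m₁ m₂ : MeasurableSpace Ω) :
    IsPiSystem (image2 (· ∩ ·) {s | MeasurableSet[m₁] s} {u | MeasurableSet[m₂] u}) := by
  rintro _ ⟨s, hs, u, hu, rfl⟩ _ ⟨s', hs', u', hu', rfl⟩ -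
  exact ⟨s ∩ s', hs.inter hs', u ∩ u', hu.inter hu', inter_inter_inter_comm s s' u u'⟩

lemma generateFrom_image2_inter (m₁ m₂ : MeasurableSpace Ω) :
    generateFrom (image2 (· ∩ ·) {s | MeasurableSet[m₁] s} {u | MeasurableSet[m₂] u})
      = m₁ ⊔ m₂ := by
  refine le_antisymm (generateFrom_le ?_) (sup_le (fun s hs => ?_) (fun u hu => ?_))
  · rintro _ ⟨s, hs, u, hu, rfl⟩
    exact (le_sup_left (b := m₂) s hs).inter (le_sup_right (a := m₁) u hu)
  · exact measurableSet_generateFrom ⟨s, hs, univ, .univ, inter_univ s⟩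
  · exact measurableSet_generateFrom ⟨univ, .univ, u, hu, univ_inter u⟩

theorem setIntegral_eq_of_isPiSystem {m mΩ : MeasurableSpace Ω} {μ : Measure Ω}
    {S : Set (Set Ω)} (hm : m ≤ mΩ) (h_eq : m = generateFrom S) (h_inter : IsPiSystem S)
    {f g : Ω → E} (hf : Integrable f μ) (hg : Integrable g μ)
    (h_univ : ∫ x, f x ∂μ = ∫ x, g x ∂μ) (basic : ∀ t ∈ S, ∫ x in t, f x ∂μ = ∫ x in t, g x ∂μ)
    {t : Set Ω} (ht : MeasurableSet[m] t) : ∫ x in t, f x ∂μ = ∫ x in t, g x ∂μ := by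
  induction t, ht using induction_on_inter h_eq h_inter with
  | empty => simp
  | basic t ht => exact basic t ht
  | compl t ht iht =>
    rw [setIntegral_compl (hm t ht) hf, setIntegral_compl (hm t ht) hg, h_univ, iht]
  | iUnion t hdisj htm iht =>
    rw [integral_iUnion (fun i => hm _ (htm i)) hdisj hf.integrableOn,
      integral_iUnion (fun i => hm _ (htm i)) hdisj hg.integrableOn]
    exact tsum_congr iht

theorem setIntegral_inter_eq_smul_of_indep {m₂ m₃ mΩ : MeasurableSpace Ω} {μ : Measure Ω}
    [IsFiniteMeasure μ] [CompleteSpace E] (h₂ : m₂ ≤ mΩ) (h₃ : m₃ ≤ mΩ) (hind : Indep m₂ m₃ μ)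
    {g : Ω → E} (hg : StronglyMeasurable[m₂] g) (hgi : Integrable g μ) {s u : Set Ω}
    (hs : MeasurableSet[m₂] s) (hu : MeasurableSet[m₃] u) :
    ∫ x in s ∩ u, g x ∂μ = μ.real u • ∫ x in s, g x ∂μ := by
  calc ∫ x in s ∩ u, g x ∂μ
  _ = ∫ x in u, μ[s.indicator g | m₃] x ∂μ := by
    rw [setIntegral_condExp h₃ (hgi.indicator (h₂ s hs)) hu, setIntegral_indicator (h₂ s hs),
      inter_comm]
  _ = ∫ _ in u, ∫ x, s.indicator g x ∂μ ∂μ :=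
    setIntegral_congr_ae (h₃ u hu) ((condExp_indep_eq h₂ h₃ (hg.indicator hs) hind).mono
      fun _ hx _ => hx)
  _ = μ.real u • ∫ x in s, g x ∂μ := by rw [setIntegral_const, integral_indicator (h₂ s hs)]

theorem condExp_sup_ae_eq_of_indep {m₁ m₂ m₃ mΩ : MeasurableSpace Ω} {μ : Measure Ω}
    [IsFiniteMeasure μ] [CompleteSpace E] (h₁₂ : m₁ ≤ m₂) (h₂ : m₂ ≤ mΩ) (h₃ : m₃ ≤ mΩ)
    (hind : Indep m₂ m₃ μ) {f : Ω → E} (hf : StronglyMeasurable[m₂] f) (hfi : Integrable f μ) :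
    μ[f | m₁ ⊔ m₃] =ᵐ[μ] μ[f | m₁] := by
  have h₁ : m₁ ≤ mΩ := h₁₂.trans h₂
  have h_rect : ∀ t ∈ image2 (· ∩ ·) {s | MeasurableSet[m₁] s} {u | MeasurableSet[m₃] u},
      ∫ x in t, μ[f | m₁] x ∂μ = ∫ x in t, f x ∂μ := by
    rintro _ ⟨s, hs, u, hu, rfl⟩
    rw [setIntegral_inter_eq_smul_of_indep h₂ h₃ hind (stronglyMeasurable_condExp.mono h₁₂)
        integrable_condExp (h₁₂ s hs) hu,
      setIntegral_inter_eq_smul_of_indep h₂ h₃ hind hf hfi (h₁₂ s hs) hu,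
      setIntegral_condExp h₁ hfi hs]
  refine (ae_eq_condExp_of_forall_setIntegral_eq (sup_le h₁ h₃) hfi
    (fun _ _ _ => integrable_condExp.integrableOn) (fun t ht _ => ?_)
    (stronglyMeasurable_condExp.mono (le_sup_left : m₁ ≤ m₁ ⊔ m₃)).aestronglyMeasurable).symm
  exact setIntegral_eq_of_isPiSystem (sup_le h₁ h₃) (generateFrom_image2_inter m₁ m₃).symm
    (isPiSystem_image2_inter m₁ m₃) integrable_condExp hfi (integral_condExp h₁) h_rect ht

theorem CondIndep.sup_of_indep {m' m₁ m₂ m₃ : MeasurableSpace Ω} [mΩ : MeasurableSpace Ω]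
    [StandardBorelSpace Ω] {μ : Measure Ω} [IsFiniteMeasure μ] {hm' : m' ≤ mΩ}
    (h₁ : m₁ ≤ mΩ) (h₂ : m₂ ≤ mΩ) (h₃ : m₃ ≤ mΩ) (hCI : CondIndep m' m₁ m₂ hm' μ)
    (hind : Indep (m' ⊔ (m₁ ⊔ m₂)) m₃ μ) :
    CondIndep (m' ⊔ m₃) (m₁ ⊔ m₃) m₂ (sup_le hm' h₃) μ := by
  have hW : m' ⊔ (m₁ ⊔ m₂) ≤ mΩ := sup_le hm' (sup_le h₁ h₂)
  have h_drop : ∀ v, MeasurableSet[m' ⊔ (m₁ ⊔ m₂)] v → μ⟦v | m' ⊔ m₃⟧ =ᵐ[μ] μ⟦v | m'⟧ :=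
    fun v hv => condExp_sup_ae_eq_of_indep le_sup_left hW h₃ hind
      (stronglyMeasurable_const.indicator hv) ((integrable_const 1).indicator (hW v hv))
  have h_pull : ∀ u v, MeasurableSet[m₃] u → MeasurableSet[m' ⊔ (m₁ ⊔ m₂)] v →
      μ⟦u ∩ v | m' ⊔ m₃⟧ =ᵐ[μ] u.indicator (μ⟦v | m'⟧) := by
    intro u v hu hv
    rw [← indicator_indicator]
    exact (condExp_indicator ((integrable_const 1).indicator (hW v hv))
      (le_sup_right (a := m') u hu)).trans (h_drop v hv).indicator
  have h_rect_meas : ∀ r ∈ image2 (· ∩ ·) {s | MeasurableSet[m₁] s} {u | MeasurableSet[m₃] u},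
      MeasurableSet r := by
    rintro _ ⟨s, hs, u, hu, rfl⟩
    exact (h₁ s hs).inter (h₃ u hu)
  rw [condIndep_iff _ _ _ _ h₁ h₂] at hCI
  refine CondIndepSets.condIndep (sup_le h₁ h₃) h₂ (isPiSystem_image2_inter m₁ m₃)
    (@isPiSystem_measurableSet Ω m₂) (generateFrom_image2_inter m₁ m₃).symm
    (@generateFrom_measurableSet Ω m₂).symm ((condIndepSets_iff _ _ _ _ h_rect_meas h₂ μ).2 ?_)
  rintro _ t ⟨s, hs, u, hu, rfl⟩ ht
  have hs' : MeasurableSet[m' ⊔ (m₁ ⊔ m₂)] s := (le_sup_left.trans le_sup_right : m₁ ≤ _) s hs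
  have ht' : MeasurableSet[m' ⊔ (m₁ ⊔ m₂)] t := (le_sup_right.trans le_sup_right : m₂ ≤ _) t ht
  beta_reduce
  rw [inter_comm s u, inter_assoc]
  filter_upwards [h_pull u (s ∩ t) hu (hs'.inter ht'), h_pull u s hu hs',
    h_drop t ht', hCI s t hs ht] with ω h_st h_s h_t h_CI
  rw [Pi.mul_apply, h_st, h_s, h_t]
  by_cases hω : ω ∈ u <;> simp [hω, h_CI]

end

/-- If `Atil ⊥ Y | A` and `Z` is independent of `(A, Atil, Y)`, then for any jointly measurable
`h`, `h(Atil, Z)` is conditionally independent of `Y` given `(A, Z)`. -/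
theorem condIndep_with_independent_noise
    {Ω γ ζ ε : Type*} [MeasurableSpace Ω] [StandardBorelSpace Ω]
    [MeasurableSpace γ] [MeasurableSpace ζ] [MeasurableSpace ε]
    (μ : Measure Ω) [IsProbabilityMeasure μ]
    {d : ℕ} (A Atil : Ω → Fin d → ℝ) (Y : Ω → γ) (Z : Ω → ζ)
    (hA : Measurable A) (hAtil : Measurable Atil) (hY : Measurable Y) (hZ : Measurable Z)
    (hCI : CondIndepFun (MeasurableSpace.comap A inferInstance) hA.comap_le Atil Y μ)
    (hZindep : IndepFun Z (fun ω => (A ω, Atil ω, Y ω)) μ)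
    (h : (Fin d → ℝ) × ζ → ε) (hh : Measurable h) :
    CondIndepFun (MeasurableSpace.comap (fun ω => (A ω, Z ω)) inferInstance)
      ((hA.prodMk hZ).comap_le) (fun ω => h (Atil ω, Z ω)) Y μ := by
  rw [condIndepFun_iff_condIndep] at hCI ⊢
  have h_noise : Indep (MeasurableSpace.comap A inferInstance ⊔
      (MeasurableSpace.comap Atil inferInstance ⊔ MeasurableSpace.comap Y inferInstance))
      (MeasurableSpace.comap Z inferInstance) μ := by
    rw [← MeasurableSpace.comap_prodMk, ← MeasurableSpace.comap_prodMk]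
    exact (IndepFun_iff_Indep _ _ _).1 hZindep.symm
  have h_pair := CondIndep.sup_of_indep hAtil.comap_le hY.comap_le hZ.comap_le hCI h_noise
  simp only [← MeasurableSpace.comap_prodMk] at h_pair
  exact condIndep_of_condIndep_of_le_left h_pair (hh.comp (comap_measurable _)).comap_le
end
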